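/- arXiv:0707.4600 — 3 statements merged into one kernel-verified Lean document; each statement's English description precedes it below -/
import Mathlib

section
/- The lifting map Δ_ϑ : [0,∞) → M given by Δ_ϑ(z) = ϑ_e^z is continuous, where M carries the topology of weak convergence of finite measures; that is, if z_n → z in [0,∞), then ϑ_e^{z_n} converges weakly to ϑ_e^z. -/
open MeasureTheory Set Filter Topology
open scoped ENNReal NNReal

noncomputable section

/-- The right half-plane `ℍ₊ = [0,∞) × ℝ`, as a subset of `ℝ × ℝ`. -/
def Hplus : Set (ℝ × ℝ) := {p | 0 ≤ p.1}

/-- Translation of a set: `B + w = {b + w : b ∈ B}`. -/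
def shiftSet (B : Set (ℝ × ℝ)) (w : ℝ × ℝ) : Set (ℝ × ℝ) := (fun b => b + w) '' B

/-!
Integrating a bounded `g` against `ϑ_e^z` gives `α ∫ ϑ(dp) ∫_0^∞ 1_{ℍ₊} g (p - (u/z, u)) du`,
and the inner integrand vanishes once `u > z p₁`. Hence
`∫ g dϑ_e^z ≤ α · sup g · z · ∫ p₁ dϑ = z · sup g`, which gives continuity at `z = 0`.
At `z₀ > 0` the inner integrand converges as `z → z₀` for every `u ≠ z₀ p₁`, since then
`p - (u/z₀, u)` is off the boundary of `ℍ₊`, and two dominated convergence arguments conclude.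
-/

lemma measurableSet_Hplus : MeasurableSet Hplus :=
  measurableSet_le measurable_const measurable_fst

lemma shiftSet_eq_preimage (B : Set (ℝ × ℝ)) (w : ℝ × ℝ) :
    shiftSet B w = (fun p => p - w) ⁻¹' B := by
  ext p
  constructor
  · rintro ⟨b, hb, rfl⟩
    simpa using hb
  · intro h
    exact ⟨p - w, h, sub_add_cancel p w⟩

lemma measurable_sub_shift (z : ℝ) :
    Measurable fun q : ℝ × (ℝ × ℝ) => q.2 - (q.1 / z, q.1) := by
  fun_prop

lemma continuousAt_indicator_Hplus {g : ℝ × ℝ → ℝ≥0∞} (hg : Continuous g) {q : ℝ × ℝ}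
    (hq : q.1 ≠ 0) : ContinuousAt (Hplus.indicator g) q := by
  rcases hq.lt_or_gt with hq | hq
  · refine continuousAt_const.congr (f := fun _ => 0) ?_
    filter_upwards [continuous_fst.continuousAt.eventually_lt continuousAt_const hq] with r hr
    exact (indicator_of_notMem (show r ∉ Hplus from not_le.mpr hr) g).symm
  · refine hg.continuousAt.congr ?_
    filter_upwards [continuousAt_const.eventually_lt continuous_fst.continuousAt hq] with r hr
    exact (indicator_of_mem (show r ∈ Hplus from hr.le) g).symm

lemma setLIntegral_Ioi_indicator_Iic (C : ℝ≥0∞) (a : ℝ) :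
    ∫⁻ u in Ioi 0, (Iic a).indicator (fun _ => C) u = C * ENNReal.ofReal a := by
  rw [lintegral_indicator measurableSet_Iic, setLIntegral_const,
    Measure.restrict_apply measurableSet_Iic, Iic_inter_Ioi, Real.volume_Ioc, sub_zero]

/-- `ϑ_e^z = ENNReal.ofReal α • liftMeasure ϑ z` for `z > 0`. -/
def liftMeasure (ϑ : Measure (ℝ × ℝ)) (z : ℝ) : Measure (ℝ × ℝ) :=
  (((volume.restrict (Ioi 0)).prod ϑ).map fun q : ℝ × (ℝ × ℝ) => q.2 - (q.1 / z, q.1)).restrict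
    Hplus

def shiftIntegral (g : ℝ × ℝ → ℝ≥0∞) (z : ℝ) (p : ℝ × ℝ) : ℝ≥0∞ :=
  ∫⁻ u in Ioi 0, Hplus.indicator g (p - (u / z, u))

section Lift

variable {ϑ : Measure (ℝ × ℝ)} [SFinite ϑ] {g : ℝ × ℝ → ℝ≥0∞} {C : ℝ≥0∞}

lemma eq_smul_liftMeasure {μ : Measure (ℝ × ℝ)} {c : ℝ≥0∞} {z : ℝ}
    (hsupp : μ {p | p.1 < 0} = 0)
    (h : ∀ B, MeasurableSet B → B ⊆ Hplus →
      μ B = c * ∫⁻ u in Ioi (0 : ℝ), ϑ (shiftSet B (u / z, u))) :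
    μ = c • liftMeasure ϑ z := by
  ext B hB
  have hB' := hB.inter measurableSet_Hplus
  have hout : μ (B \ Hplus) = 0 :=
    measure_mono_null (fun p hp => show p.1 < 0 from not_le.mp hp.2) hsupp
  rw [← measure_inter_add_sdiff B measurableSet_Hplus, hout, add_zero,
    h _ hB' inter_subset_right, Measure.smul_apply, smul_eq_mul, liftMeasure,
    Measure.restrict_apply hB, Measure.map_apply (measurable_sub_shift z) hB',
    Measure.prod_apply (measurable_sub_shift z hB')]
  simp only [shiftSet_eq_preimage]
  rfl

lemma lintegral_liftMeasure (hg : Measurable g) (z : ℝ) :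
    ∫⁻ q, g q ∂liftMeasure ϑ z = ∫⁻ p, shiftIntegral g z p ∂ϑ := by
  rw [liftMeasure, ← lintegral_indicator measurableSet_Hplus,
    lintegral_map (hg.indicator measurableSet_Hplus) (measurable_sub_shift z),
    lintegral_prod_symm (fun q : ℝ × (ℝ × ℝ) => Hplus.indicator g (q.2 - (q.1 / z, q.1)))
      ((hg.indicator measurableSet_Hplus).comp (measurable_sub_shift z)).aemeasurable]
  rfl

lemma measurable_shiftIntegral (hg : Measurable g) (z : ℝ) : Measurable (shiftIntegral g z) :=
  Measurable.lintegral_prod_right' ((hg.indicator measurableSet_Hplus).comp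
    (measurable_fst.sub ((measurable_snd.div_const z).prodMk measurable_snd)))

lemma indicator_shift_le (hgC : ∀ q, g q ≤ C) {z z' : ℝ} (hz : 0 < z) (hzz' : z ≤ z')
    {p : ℝ × ℝ} (hp : 0 ≤ p.1) (u : ℝ) :
    Hplus.indicator g (p - (u / z, u)) ≤ (Iic (z' * p.1)).indicator (fun _ => C) u := by
  by_cases hu : u ≤ z' * p.1
  · rw [indicator_of_mem (mem_Iic.mpr hu)]
    exact (indicator_le_self _ _ _).trans (hgC _)
  · have hlt : p.1 < u / z := (lt_div_iff₀ hz).mpr (by nlinarith)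
    have hout : p - (u / z, u) ∉ Hplus := by
      simp only [Hplus, mem_ofPred_eq, Prod.fst_sub, not_le]
      linarith
    rw [indicator_of_notMem hout]
    exact zero_le

lemma shiftIntegral_le (hgC : ∀ q, g q ≤ C) {z z' : ℝ} (hz : 0 < z) (hzz' : z ≤ z')
    {p : ℝ × ℝ} (hp : 0 ≤ p.1) :
    shiftIntegral g z p ≤ C * ENNReal.ofReal z' * ENNReal.ofReal p.1 := by
  rw [mul_assoc, ← ENNReal.ofReal_mul (hz.le.trans hzz'), ← setLIntegral_Ioi_indicator_Iic]
  exact lintegral_mono (indicator_shift_le hgC hz hzz' hp)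

lemma lintegral_liftMeasure_le (hpos : ∀ᵐ p ∂ϑ, 0 ≤ p.1) (hg : Measurable g)
    (hgC : ∀ q, g q ≤ C) {z : ℝ} (hz : 0 < z) :
    ∫⁻ q, g q ∂liftMeasure ϑ z ≤ C * ENNReal.ofReal z * ∫⁻ p, ENNReal.ofReal p.1 ∂ϑ := by
  rw [lintegral_liftMeasure hg, ← lintegral_const_mul _ measurable_fst.ennreal_ofReal]
  exact lintegral_mono_ae (hpos.mono fun p hp => shiftIntegral_le hgC hz le_rfl hp)

lemma tendsto_shiftIntegral (hg : Continuous g) (hgC : ∀ q, g q ≤ C) (hC : C ≠ ∞) {z₀ : ℝ}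
    (hz₀ : 0 < z₀) {p : ℝ × ℝ} (hp : 0 ≤ p.1) :
    Tendsto (fun z => shiftIntegral g z p) (𝓝 z₀) (𝓝 (shiftIntegral g z₀ p)) := by
  have hnear : ∀ᶠ z in 𝓝 z₀, 0 < z ∧ z ≤ z₀ + 1 :=
    (lt_mem_nhds hz₀).and (eventually_le_nhds (by linarith))
  have hoff : ∀ᵐ u ∂volume.restrict (Ioi (0 : ℝ)), u ≠ z₀ * p.1 :=
    ae_restrict_of_ae (Measure.ae_ne volume _)
  refine tendsto_lintegral_filter_of_dominated_convergence
    ((Iic ((z₀ + 1) * p.1)).indicator fun _ => C) ?_ ?_ ?_ ?_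
  · exact Eventually.of_forall fun z => (hg.measurable.indicator measurableSet_Hplus).comp
      (measurable_const.sub ((measurable_id.div_const z).prodMk measurable_id))
  · filter_upwards [hnear] with z hz
    exact Eventually.of_forall (indicator_shift_le hgC hz.1 hz.2 hp)
  · rw [setLIntegral_Ioi_indicator_Iic]
    exact ENNReal.mul_ne_top hC ENNReal.ofReal_ne_top
  · filter_upwards [hoff] with u hu
    have hq : (p - (u / z₀, u)).1 ≠ 0 := by
      rw [Prod.fst_sub, sub_ne_zero, ne_comm, ne_eq, div_eq_iff hz₀.ne', mul_comm]
      exact hu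
    exact (continuousAt_indicator_Hplus hg hq).tendsto.comp (continuousAt_const.sub
      ((continuousAt_const.div continuousAt_id hz₀.ne').prodMk continuousAt_const))

lemma tendsto_lintegral_liftMeasure (hpos : ∀ᵐ p ∂ϑ, 0 ≤ p.1)
    (hmean : ∫⁻ p, ENNReal.ofReal p.1 ∂ϑ ≠ ∞) (hg : Continuous g) (hgC : ∀ q, g q ≤ C)
    (hC : C ≠ ∞) {z₀ : ℝ} (hz₀ : 0 < z₀) :
    Tendsto (fun z => ∫⁻ q, g q ∂liftMeasure ϑ z) (𝓝 z₀)
      (𝓝 (∫⁻ q, g q ∂liftMeasure ϑ z₀)) := by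
  simp only [lintegral_liftMeasure hg.measurable]
  have hnear : ∀ᶠ z in 𝓝 z₀, 0 < z ∧ z ≤ z₀ + 1 :=
    (lt_mem_nhds hz₀).and (eventually_le_nhds (by linarith))
  refine tendsto_lintegral_filter_of_dominated_convergence
    (fun p => C * ENNReal.ofReal (z₀ + 1) * ENNReal.ofReal p.1) ?_ ?_ ?_ ?_
  · exact Eventually.of_forall (measurable_shiftIntegral hg.measurable)
  · filter_upwards [hnear] with z hz
    exact hpos.mono fun p hp => shiftIntegral_le hgC hz.1 hz.2 hp
  · rw [lintegral_const_mul _ measurable_fst.ennreal_ofReal]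
    exact ENNReal.mul_ne_top (ENNReal.mul_ne_top hC ENNReal.ofReal_ne_top) hmean
  · exact hpos.mono fun p hp => tendsto_shiftIntegral hg hgC hC hz₀ hp

lemma lintegral_smul_liftMeasure_le {α : ℝ} (hα : 0 < α) (hpos : ∀ᵐ p ∂ϑ, 0 ≤ p.1)
    (hmean : ∫⁻ p, ENNReal.ofReal p.1 ∂ϑ = ENNReal.ofReal α⁻¹) (hg : Measurable g)
    (hgC : ∀ q, g q ≤ C) {z : ℝ} (hz : 0 < z) :
    ∫⁻ q, g q ∂(ENNReal.ofReal α • liftMeasure ϑ z) ≤ C * ENNReal.ofReal z :=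
  calc ∫⁻ q, g q ∂(ENNReal.ofReal α • liftMeasure ϑ z)
      ≤ ENNReal.ofReal α * (C * ENNReal.ofReal z * ENNReal.ofReal α⁻¹) := by
        rw [lintegral_smul_measure, ← hmean]
        exact mul_le_mul_right (lintegral_liftMeasure_le hpos hg hgC hz) _
    _ = C * ENNReal.ofReal z := by
        rw [mul_comm, mul_assoc, ← ENNReal.ofReal_mul (inv_nonneg.mpr hα.le),
          inv_mul_cancel₀ hα.ne', ENNReal.ofReal_one, mul_one]

end Lift

lemma tendsto_nhdsGE_zero_of_le_mul_ofReal {F : ℝ → ℝ≥0∞} {C : ℝ≥0∞} (hC : C ≠ ∞)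
    (hF : ∀ z ∈ Ici (0 : ℝ), F z ≤ C * ENNReal.ofReal z) : Tendsto F (𝓝[≥] 0) (𝓝 0) := by
  have hlin : Tendsto (fun z => C * ENNReal.ofReal z) (𝓝 0) (𝓝 (C * ENNReal.ofReal 0)) :=
    ENNReal.Tendsto.const_mul (ENNReal.tendsto_ofReal tendsto_id) (Or.inr hC)
  rw [ENNReal.ofReal_zero, mul_zero] at hlin
  exact tendsto_of_tendsto_of_tendsto_of_le_of_le' tendsto_const_nhds
    (hlin.mono_left nhdsWithin_le_nhds) (Eventually.of_forall fun _ => zero_le)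
    (eventually_nhdsWithin_of_forall hF)

theorem stmt_5_general (α : ℝ) (hα : 0 < α) (ϑ : Measure (ℝ × ℝ)) [IsProbabilityMeasure ϑ]
    (hϑsupp : ϑ {p : ℝ × ℝ | p.1 < 0} = 0)
    (hϑmean : ∫⁻ p, ENNReal.ofReal p.1 ∂ϑ = ENNReal.ofReal α⁻¹)
    (τ : ℝ → FiniteMeasure (ℝ × ℝ))
    (hτ0 : (τ 0 : Measure (ℝ × ℝ)) = 0)
    (hτsupp : ∀ z : ℝ, 0 < z → (τ z : Measure (ℝ × ℝ)) {p : ℝ × ℝ | p.1 < 0} = 0)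
    (hτ : ∀ z : ℝ, 0 < z → ∀ B : Set (ℝ × ℝ), MeasurableSet B → B ⊆ Hplus →
      (τ z : Measure (ℝ × ℝ)) B
        = ENNReal.ofReal α * ∫⁻ u in Ioi (0 : ℝ), ϑ (shiftSet B (u / z, u))) :
    ContinuousOn τ (Ici (0 : ℝ)) := by
  have hτ_eq (z : ℝ) (hz : 0 < z) :
      (τ z : Measure (ℝ × ℝ)) = ENNReal.ofReal α • liftMeasure ϑ z :=
    eq_smul_liftMeasure (hτsupp z hz) (hτ z hz)
  have hpos : ∀ᵐ p ∂ϑ, 0 ≤ p.1 :=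
    measure_mono_null (fun p hp => show p.1 < 0 from not_le.mp hp) hϑsupp
  intro z₀ hz₀
  refine FiniteMeasure.tendsto_iff_forall_lintegral_tendsto.mpr fun f => ?_
  obtain ⟨C, hfC⟩ : ∃ C : ℝ≥0, ∀ q, f q ≤ C :=
    ⟨_, BoundedContinuousFunction.NNReal.upper_bound f⟩
  have hgC (q : ℝ × ℝ) : (f q : ℝ≥0∞) ≤ C := ENNReal.coe_le_coe.mpr (hfC q)
  have hg : Continuous fun q => (f q : ℝ≥0∞) := ENNReal.continuous_coe.comp f.continuous
  rcases (mem_Ici.mp hz₀).eq_or_lt with rfl | hz₀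
  · rw [hτ0, lintegral_zero_measure]
    refine tendsto_nhdsGE_zero_of_le_mul_ofReal (ENNReal.coe_ne_top (r := C)) fun z hz => ?_
    rcases (mem_Ici.mp hz).eq_or_lt with rfl | hz
    · simp [hτ0]
    rw [hτ_eq z hz]
    exact lintegral_smul_liftMeasure_le hα hpos hϑmean hg.measurable hgC hz
  · have hlim := ENNReal.Tendsto.const_mul (a := ENNReal.ofReal α)
      (tendsto_lintegral_liftMeasure hpos (hϑmean ▸ ENNReal.ofReal_ne_top) hg hgC
        ENNReal.coe_ne_top hz₀) (Or.inr ENNReal.ofReal_ne_top)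
    rw [hτ_eq z₀ hz₀, lintegral_smul_measure]
    refine (hlim.mono_left nhdsWithin_le_nhds).congr' ?_
    filter_upwards [nhdsWithin_le_nhds (lt_mem_nhds hz₀)] with z hz
    rw [hτ_eq z hz, lintegral_smul_measure, smul_eq_mul]

/-- the lifting map `Δ_ϑ : [0,∞) → M`, `z ↦ ϑ_e^z`, is continuous for the
topology of weak convergence of finite measures. -/
theorem stmt_5 (α : ℝ) (hα : 0 < α) (ϑ : Measure (ℝ × ℝ)) [IsProbabilityMeasure ϑ]
    (hϑsupp : ϑ {p : ℝ × ℝ | p.1 < 0} = 0)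
    (hϑ0 : ϑ {p : ℝ × ℝ | p.1 = 0} = 0)
    (hϑmean : ∫⁻ p, ENNReal.ofReal p.1 ∂ϑ = ENNReal.ofReal α⁻¹)
    (τ : ℝ → FiniteMeasure (ℝ × ℝ))
    (hτ0 : (τ 0 : Measure (ℝ × ℝ)) = 0)
    (hτsupp : ∀ z : ℝ, 0 < z → (τ z : Measure (ℝ × ℝ)) {p : ℝ × ℝ | p.1 < 0} = 0)
    (hτ : ∀ z : ℝ, 0 < z → ∀ B : Set (ℝ × ℝ), MeasurableSet B → B ⊆ Hplus →
      (τ z : Measure (ℝ × ℝ)) B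
        = ENNReal.ofReal α * ∫⁻ u in Ioi (0 : ℝ), ϑ (shiftSet B (u / z, u))) :
    ContinuousOn τ (Ici (0 : ℝ)) :=
  stmt_5_general α hα ϑ hϑsupp hϑmean τ hτ0 hτsupp hτ
end
end

section
/- Let c > 0 and suppose ϑ is the pushforward of ν under the map x ↦ (x, cx), where ν is a Borel probability measure on [0,∞) with ν({0}) = 0 and ∫ x dν(x) = 1/α. Then for every z with 0 < z ≤ c and every y ∈ ℝ: ϑ_e^z([0,∞) × [y,∞)) = z if y ≤ 0, and ϑ_e^z([0,∞) × [y,∞)) = c ν_e([y c⁻¹, ∞)) − (c − z) ν_e([y (c − z)⁻¹, ∞)) if y > 0, where the last term is understood to be zero when z = c. -/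
/-!
Because `ϑ` lives on the ray `{(x, c x)}`, the shifted quadrant `[u/z,∞) × [y+u,∞)` has
`ϑ`-measure `ν([max(u/z, (y+u)/c), ∞))`, so `ϑ_e^z([0,∞) × [y,∞))` is
`α ∫₀^∞ ν([max(u/z, (y+u)/c), ∞)) du`. For `y ≤ 0` the maximum is `u/z`, and the substitution
`v = u/z` with the tail formula `∫₀^∞ ν([v,∞)) dv = 1/α` gives `z`. For `y > 0` the maximum is
`(y+u)/c` up to `u = zy/(c-z)` and `u/z` afterwards; the two linear substitutions give
`c ∫_{y/c}^{y/(c-z)} + z ∫_{y/(c-z)}^∞` of `v ↦ ν([v,∞))`, which is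
`c ∫_{y/c}^∞ - (c-z) ∫_{y/(c-z)}^∞`.
-/

open MeasureTheory Set Filter Topology

noncomputable section

/-- The excess lifetime distribution of `ν`: the measure on `ℝ` with Lebesgue density
`v ↦ α ν([v,∞))` on `[0,∞)` and `0` on `(-∞,0)`. -/
def excessLife (α : ℝ) (ν : Measure ℝ) : Measure ℝ :=
  volume.withDensity fun v => if 0 ≤ v then ENNReal.ofReal α * ν (Ici v) else 0

open ENNReal

theorem measurable_measure_Ici (ν : Measure ℝ) : Measurable fun v : ℝ => ν (Ici v) :=
  Antitone.measurable fun _ _ hab => measure_mono (Ici_subset_Ici.2 hab)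

theorem setLIntegral_comp_mul_add {a : ℝ} (ha : 0 < a) (b : ℝ) (g : ℝ → ℝ≥0∞) (s : Set ℝ) :
    ∫⁻ u in s, g (a * u + b) = ENNReal.ofReal a⁻¹ * ∫⁻ v in (a * · + b) '' s, g v := by
  have hemb : MeasurableEmbedding (a * · + b : ℝ → ℝ) :=
    (measurableEmbedding_addRight b).comp (measurableEmbedding_mulLeft₀ ha.ne')
  have hmap : Measure.map (a * · + b) volume = ENNReal.ofReal a⁻¹ • (volume : Measure ℝ) := by
    rw [show (a * · + b : ℝ → ℝ) = (· + b) ∘ (a * ·) from rfl,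
      ← Measure.map_map (measurable_add_const b) (measurable_const_mul a),
      Real.map_volume_mul_left ha.ne', Measure.map_smul, map_add_right_eq_self,
      abs_of_pos (inv_pos.2 ha)]
  rw [(hemb.measurable.measurePreserving volume).setLIntegral_comp_emb hemb, hmap,
    Measure.restrict_smul, lintegral_smul_measure, smul_eq_mul]

theorem image_affine_Ioi {a : ℝ} (ha : 0 < a) (b t : ℝ) :
    (a * · + b) '' Ioi t = Ioi (a * t + b) := by
  rw [← image_image (· + b) (a * ·), image_mul_left_Ioi ha, image_add_const_Ioi]

theorem setLIntegral_Ioi_measure_Ici (ν : Measure ℝ) :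
    ∫⁻ v in Ioi 0, ν (Ici v) = ∫⁻ x, ENNReal.ofReal x ∂ν := by
  have hpos : 0 ≤ᵐ[ν] fun x : ℝ => max x 0 := ae_of_all _ fun x => le_max_right x 0
  have := lintegral_eq_lintegral_meas_le ν hpos (measurable_id.max measurable_const).aemeasurable
  simp only [ENNReal.ofReal_max, ENNReal.ofReal_zero, max_zero] at this
  rw [this]
  refine setLIntegral_congr_fun measurableSet_Ioi fun v (hv : 0 < v) => ?_
  congr 1
  ext x
  simp [hv.not_ge]

theorem excessLife_Ici (α : ℝ) (ν : Measure ℝ) {a : ℝ} (ha : 0 ≤ a) :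
    excessLife α ν (Ici a) = ENNReal.ofReal α * ∫⁻ v in Ioi a, ν (Ici v) := by
  rw [excessLife, withDensity_apply _ measurableSet_Ici,
    ← Measure.restrict_congr_set (Ioi_ae_eq_Ici (a := a)),
    setLIntegral_congr_fun measurableSet_Ioi fun v (hv : a < v) => if_pos (ha.trans hv.le),
    lintegral_const_mul _ (measurable_measure_Ici ν)]

theorem shiftSet_Ici_prod_Ici (a b : ℝ) (w : ℝ × ℝ) :
    shiftSet (Ici a ×ˢ Ici b) w = Ici (a + w.1) ×ˢ Ici (b + w.2) := by
  ext p
  simp only [shiftSet, image_add_right, mem_preimage, mem_prod, mem_Ici, ← sub_eq_add_neg,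
    Prod.fst_sub, Prod.snd_sub, le_sub_iff_add_le]

theorem map_graph_Ici_prod_Ici {c : ℝ} (hc : 0 < c) (ν : Measure ℝ) (a b : ℝ) :
    ν.map (fun x => (x, c * x)) (Ici a ×ˢ Ici b) = ν (Ici (max a (b / c))) := by
  rw [Measure.map_apply (by fun_prop) (measurableSet_Ici.prod measurableSet_Ici)]
  congr 1
  ext x
  simp only [mem_preimage, mem_prod, mem_Ici, max_le_iff, div_le_iff₀ hc, mul_comm x]

section MaxIntegral

variable (g : ℝ → ℝ≥0∞) {c z y : ℝ}

theorem setLIntegral_Ioi_comp_max_of_nonpos (hz : 0 < z) (hzc : z ≤ c) (hy : y ≤ 0) :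
    ∫⁻ u in Ioi 0, g (max (u / z) ((y + u) / c)) = ENNReal.ofReal z * ∫⁻ v in Ioi 0, g v := by
  have hc : 0 < c := hz.trans_le hzc
  calc ∫⁻ u in Ioi 0, g (max (u / z) ((y + u) / c))
      = ∫⁻ u in Ioi 0, g (z⁻¹ * u + 0) := by
        refine setLIntegral_congr_fun measurableSet_Ioi fun u (hu : 0 < u) => ?_
        rw [max_eq_left ((div_le_div_iff₀ hc hz).2 (by nlinarith)), add_zero, inv_mul_eq_div]
    _ = ENNReal.ofReal z * ∫⁻ v in Ioi 0, g v := by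
        rw [setLIntegral_comp_mul_add (inv_pos.2 hz), image_affine_Ioi (inv_pos.2 hz), inv_inv,
          mul_zero, add_zero]

theorem setLIntegral_Ioi_comp_max_of_lt (hz : 0 < z) (hzc : z < c) (hy : 0 < y) :
    ∫⁻ u in Ioi 0, g (max (u / z) ((y + u) / c))
      = ENNReal.ofReal c * (∫⁻ v in Ioc (y / c) (y / (c - z)), g v)
        + ENNReal.ofReal z * ∫⁻ v in Ioi (y / (c - z)), g v := by
  have hc : 0 < c := hz.trans hzc
  have hcz : 0 < c - z := sub_pos.2 hzc
  -- the two arguments of the `max` cross at `u = z * y / (c - z)`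
  rw [← Ioc_union_Ioi_eq_Ioi (by positivity : 0 ≤ z * y / (c - z)),
    lintegral_union measurableSet_Ioi Ioc_disjoint_Ioi_same]
  congr 1
  · calc ∫⁻ u in Ioc 0 (z * y / (c - z)), g (max (u / z) ((y + u) / c))
        = ∫⁻ u in Ioc 0 (z * y / (c - z)), g (c⁻¹ * u + y / c) := by
          refine setLIntegral_congr_fun measurableSet_Ioc fun u hu => ?_
          have : u * (c - z) ≤ z * y := (le_div_iff₀ hcz).1 hu.2
          rw [max_eq_right ((div_le_div_iff₀ hz hc).2 (by nlinarith))]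
          ring_nf
      _ = ENNReal.ofReal c * ∫⁻ v in Ioc (y / c) (y / (c - z)), g v := by
          rw [setLIntegral_comp_mul_add (inv_pos.2 hc), image_affine_Ioc (inv_pos.2 hc), inv_inv,
            mul_zero, zero_add, inv_mul_eq_div,
            show z * y / (c - z) / c + y / c = y / (c - z) by field_simp; ring]
  · calc ∫⁻ u in Ioi (z * y / (c - z)), g (max (u / z) ((y + u) / c))
        = ∫⁻ u in Ioi (z * y / (c - z)), g (z⁻¹ * u + 0) := by
          refine setLIntegral_congr_fun measurableSet_Ioi fun u (hu : z * y / (c - z) < u) => ?_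
          have : z * y ≤ u * (c - z) := (div_le_iff₀ hcz).1 hu.le
          rw [max_eq_left ((div_le_div_iff₀ hc hz).2 (by nlinarith)), add_zero, inv_mul_eq_div]
      _ = ENNReal.ofReal z * ∫⁻ v in Ioi (y / (c - z)), g v := by
          rw [setLIntegral_comp_mul_add (inv_pos.2 hz), image_affine_Ioi (inv_pos.2 hz), inv_inv,
            add_zero, inv_mul_eq_div, mul_div_assoc, mul_div_cancel_left₀ _ hz.ne']

theorem setLIntegral_Ioi_comp_max_add (hz : 0 < z) (hzc : z ≤ c) (hy : 0 < y) :
    (∫⁻ u in Ioi 0, g (max (u / z) ((y + u) / c)))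
        + ENNReal.ofReal (c - z) * ∫⁻ v in Ioi (y / (c - z)), g v
      = ENNReal.ofReal c * ∫⁻ v in Ioi (y / c), g v := by
  rcases hzc.eq_or_lt with rfl | hlt
  · rw [sub_self, ENNReal.ofReal_zero, zero_mul, add_zero]
    calc ∫⁻ u in Ioi 0, g (max (u / z) ((y + u) / z))
        = ∫⁻ u in Ioi 0, g (z⁻¹ * u + y / z) := by
          refine setLIntegral_congr_fun measurableSet_Ioi fun u (hu : 0 < u) => ?_
          rw [max_eq_right (div_le_div_of_nonneg_right (by linarith) hz.le)]
          ring_nf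
      _ = ENNReal.ofReal z * ∫⁻ v in Ioi (y / z), g v := by
          rw [setLIntegral_comp_mul_add (inv_pos.2 hz), image_affine_Ioi (inv_pos.2 hz), inv_inv,
            mul_zero, zero_add]
  · have hcz : 0 < c - z := sub_pos.2 hlt
    have hsplit : y / c ≤ y / (c - z) :=
      div_le_div_of_nonneg_left hy.le hcz (by linarith)
    rw [setLIntegral_Ioi_comp_max_of_lt g hz hlt hy, add_assoc, ← add_mul,
      ← ENNReal.ofReal_add hz.le hcz.le, add_sub_cancel, ← mul_add,
      ← lintegral_union measurableSet_Ioi Ioc_disjoint_Ioi_same, Ioc_union_Ioi_eq_Ioi hsplit]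

end MaxIntegral

theorem stmt_13_general (α : ℝ) (hα : 0 < α) (c : ℝ) (hc : 0 < c)
    (ν : Measure ℝ)
    (hνmean : ∫⁻ x, ENNReal.ofReal x ∂ν = ENNReal.ofReal α⁻¹)
    (ϑ : Measure (ℝ × ℝ)) (hϑ : ϑ = ν.map (fun x : ℝ => (x, c * x)))
    (z : ℝ) (hz : 0 < z) (hzc : z ≤ c) (τ : Measure (ℝ × ℝ))
    (hτ : ∀ B : Set (ℝ × ℝ), MeasurableSet B → B ⊆ Hplus →
      τ B = ENNReal.ofReal α * ∫⁻ u in Ioi (0 : ℝ), ϑ (shiftSet B (u / z, u))) :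
    ∀ y : ℝ,
      (y ≤ 0 → (τ (Ici (0 : ℝ) ×ˢ Ici y)).toReal = z) ∧
      (0 < y → (τ (Ici (0 : ℝ) ×ˢ Ici y)).toReal
          = c * (excessLife α ν (Ici (y / c))).toReal
            - (c - z) * (excessLife α ν (Ici (y / (c - z)))).toReal) := by
  intro y
  have hτy : τ (Ici 0 ×ˢ Ici y)
      = ENNReal.ofReal α * ∫⁻ u in Ioi 0, ν (Ici (max (u / z) ((y + u) / c))) := by
    rw [hτ _ (measurableSet_Ici.prod measurableSet_Ici) fun p hp => hp.1]
    congr 1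
    refine lintegral_congr fun u => ?_
    rw [shiftSet_Ici_prod_Ici, hϑ, map_graph_Ici_prod_Ici hc, zero_add]
  have hmean : ∫⁻ v in Ioi 0, ν (Ici v) = ENNReal.ofReal α⁻¹ :=
    (setLIntegral_Ioi_measure_Ici ν).trans hνmean
  have htail_ne_top (t : ℝ) (ht : 0 ≤ t) : ∫⁻ v in Ioi t, ν (Ici v) ≠ ⊤ :=
    ne_top_of_le_ne_top (hmean ▸ ofReal_ne_top) (lintegral_mono_set (Ioi_subset_Ioi ht))
  refine ⟨fun hy => ?_, fun hy => ?_⟩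
  · rw [hτy, setLIntegral_Ioi_comp_max_of_nonpos (fun v => ν (Ici v)) hz hzc hy, hmean,
      ← ofReal_mul hz.le, ← ofReal_mul hα.le, toReal_ofReal (by positivity)]
    field_simp
  · have hcz : 0 ≤ c - z := sub_nonneg.2 hzc
    have hkey := setLIntegral_Ioi_comp_max_add (fun v => ν (Ici v)) hz hzc hy
    have hsecond_ne_top :=
      mul_ne_top (ofReal_ne_top (r := c - z)) (htail_ne_top _ (div_nonneg hy.le hcz))
    have hfirst_ne_top := ne_top_of_le_ne_top
      (mul_ne_top (ofReal_ne_top (r := c)) (htail_ne_top (y / c) (by positivity)))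
      (hkey ▸ le_self_add)
    have hkey_real := congrArg ENNReal.toReal hkey
    rw [toReal_add hfirst_ne_top hsecond_ne_top] at hkey_real
    simp only [toReal_mul, toReal_ofReal hc.le, toReal_ofReal hcz] at hkey_real
    rw [hτy, excessLife_Ici α ν (by positivity), excessLife_Ici α ν (div_nonneg hy.le hcz)]
    simp only [toReal_mul, toReal_ofReal hα.le]
    linear_combination α * hkey_real

/-- linear deadlines `ϑ = ν ∘ (x ↦ (x,cx))⁻¹`, case `0 < z ≤ c`:
`ϑ_e^z([0,∞)×[y,∞)) = z` for `y ≤ 0`, and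
`= c ν_e([y/c,∞)) − (c−z) ν_e([y/(c−z),∞))` for `y > 0` (last term zero when `z = c`). -/
theorem stmt_13 (α : ℝ) (hα : 0 < α) (c : ℝ) (hc : 0 < c)
    (ν : Measure ℝ) [IsProbabilityMeasure ν]
    (hνsupp : ν {x : ℝ | x < 0} = 0) (hνatom : ν ({0} : Set ℝ) = 0)
    (hνmean : ∫⁻ x, ENNReal.ofReal x ∂ν = ENNReal.ofReal α⁻¹)
    (ϑ : Measure (ℝ × ℝ)) (hϑ : ϑ = ν.map (fun x : ℝ => (x, c * x)))
    (z : ℝ) (hz : 0 < z) (hzc : z ≤ c) (τ : Measure (ℝ × ℝ)) [IsFiniteMeasure τ]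
    (hτsupp : τ {p : ℝ × ℝ | p.1 < 0} = 0)
    (hτ : ∀ B : Set (ℝ × ℝ), MeasurableSet B → B ⊆ Hplus →
      τ B = ENNReal.ofReal α * ∫⁻ u in Ioi (0 : ℝ), ϑ (shiftSet B (u / z, u))) :
    ∀ y : ℝ,
      (y ≤ 0 → (τ (Ici (0 : ℝ) ×ˢ Ici y)).toReal = z) ∧
      (0 < y → (τ (Ici (0 : ℝ) ×ˢ Ici y)).toReal
          = c * (excessLife α ν (Ici (y / c))).toReal
            - (c - z) * (excessLife α ν (Ici (y / (c - z)))).toReal) :=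
  stmt_13_general α hα c hc ν hνmean ϑ hϑ z hz hzc τ hτ
end
end

section
/- Let z > 0, let ξ₀ be any finite nonnegative Borel measure on ℍ₊, and define for each t ≥ 0 the finite Borel measure ζ(t) on ℍ₊ by ζ(t)(B) = ξ₀(B + (t z⁻¹, t)) + α ∫₀^t ϑ(B + (s z⁻¹, s)) ds for all Borel B ⊆ ℍ₊. Then ζ(t) converges to ϑ_e^z in total variation as t → ∞: sup over Borel B ⊆ ℍ₊ of |ζ(t)(B) − ϑ_e^z(B)| → 0 as t → ∞. -/
/-!
Splitting `∫₀^∞ = ∫₀^t + ∫_t^∞` in the definition of `ϑ_e^z` gives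
`ζ(t)(B) - ϑ_e^z(B) = ξ₀(B + (t/z, t)) - α ∫_t^∞ ϑ(B + (s/z, s)) ds`.
For `B ⊆ ℍ₊` each of the two terms is at most its value at `B = ℍ₊`, namely the tail
`ξ₀{x ≥ t/z}` of a finite measure and the tail of the convergent integral
`α ∫₀^∞ ϑ{x ≥ s/z} ds = ϑ_e^z(ℍ₊) < ∞`. Both tend to `0`, uniformly in `B`.
-/

open MeasureTheory Set Filter Topology

noncomputable section

open scoped ENNReal

lemma shiftSet_Hplus (w : ℝ × ℝ) : shiftSet Hplus w = {p | w.1 ≤ p.1} := by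
  ext q
  constructor
  · rintro ⟨b, hb, rfl⟩
    exact le_add_of_nonneg_left (show 0 ≤ b.1 from hb)
  · intro hq
    exact ⟨q - w, show 0 ≤ q.1 - w.1 from sub_nonneg.2 hq, sub_add_cancel q w⟩

lemma measure_shiftSet_le_of_subset_Hplus (μ : Measure (ℝ × ℝ)) {B : Set (ℝ × ℝ)}
    (hB : B ⊆ Hplus) (w : ℝ × ℝ) : μ (shiftSet B w) ≤ μ {p | w.1 ≤ p.1} := by
  rw [← shiftSet_Hplus]
  exact measure_mono (image_mono hB)

lemma tendsto_measure_setOf_le_atTop {X : Type*} [MeasurableSpace X] (μ : Measure X)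
    [IsFiniteMeasure μ] {f : X → ℝ} (hf : Measurable f) :
    Tendsto (fun x => μ {p | x ≤ f p}) atTop (𝓝 0) := by
  have h := tendsto_measure_iInter_atTop (μ := μ) (s := fun x : ℝ => {p | x ≤ f p})
    (fun _ => (measurableSet_le measurable_const hf).nullMeasurableSet)
    (fun _ _ hxy _ hp => hxy.trans hp) ⟨0, measure_ne_top _ _⟩
  have hempty : ⋂ x : ℝ, {p | x ≤ f p} = ∅ :=
    iInter_eq_empty_iff.2 fun p => ⟨f p + 1, fun hp => by linarith [show f p + 1 ≤ f p from hp]⟩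
  rwa [hempty, measure_empty] at h

lemma tendsto_setLIntegral_Ioi_atTop {f : ℝ → ℝ≥0∞} {a : ℝ}
    (hf : ∫⁻ x in Ioi a, f x ≠ ∞) :
    Tendsto (fun t => ∫⁻ x in Ioi t, f x) atTop (𝓝 0) := by
  simp_rw [← withDensity_apply' f]
  have h := tendsto_measure_iInter_atTop (μ := volume.withDensity f) (s := Ioi)
    (fun _ => measurableSet_Ioi.nullMeasurableSet) antitone_Ioi
    ⟨a, by rwa [withDensity_apply']⟩
  have hempty : ⋂ t : ℝ, Ioi t = ∅ := iInter_eq_empty_iff.2 fun x => ⟨x, lt_irrefl x⟩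
  rwa [hempty, measure_empty] at h

lemma abs_toReal_add_sub_add_le {a b c : ℝ≥0∞} {ε : ℝ} (hε : 0 ≤ ε) (hb : b ≠ ∞)
    (ha : a ≤ ENNReal.ofReal ε) (hc : c ≤ ENNReal.ofReal ε) :
    |(a + b).toReal - (b + c).toReal| ≤ ε := by
  rw [ENNReal.toReal_add (ne_top_of_le_ne_top ENNReal.ofReal_ne_top ha) hb,
    ENNReal.toReal_add hb (ne_top_of_le_ne_top ENNReal.ofReal_ne_top hc), add_comm a.toReal,
    add_sub_add_left_eq_sub]
  exact abs_sub_le_of_nonneg_of_le ENNReal.toReal_nonneg (ENNReal.toReal_le_of_le_ofReal hε ha)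
    ENNReal.toReal_nonneg (ENNReal.toReal_le_of_le_ofReal hε hc)

theorem stmt_15_general (α : ℝ) (ϑ : Measure (ℝ × ℝ))
    (z : ℝ) (hz : 0 < z) (τ : Measure (ℝ × ℝ)) [IsFiniteMeasure τ]
    (hτ : ∀ B : Set (ℝ × ℝ), MeasurableSet B → B ⊆ Hplus →
      τ B = ENNReal.ofReal α * ∫⁻ u in Ioi (0 : ℝ), ϑ (shiftSet B (u / z, u)))
    (ξ₀ : Measure (ℝ × ℝ)) [IsFiniteMeasure ξ₀]
    (ζ : ℝ → Measure (ℝ × ℝ))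
    (hζ : ∀ t : ℝ, 0 ≤ t → ∀ B : Set (ℝ × ℝ), MeasurableSet B → B ⊆ Hplus →
      ζ t B = ξ₀ (shiftSet B (t / z, t))
        + ENNReal.ofReal α * ∫⁻ s in Ioc (0 : ℝ) t, ϑ (shiftSet B (s / z, s))) :
    ∀ ε : ℝ, 0 < ε → ∃ T : ℝ, 0 ≤ T ∧ ∀ t : ℝ, T ≤ t →
      ∀ B : Set (ℝ × ℝ), MeasurableSet B → B ⊆ Hplus →
        |(ζ t B).toReal - (τ B).toReal| ≤ ε := by
  intro ε hε
  set c := ENNReal.ofReal α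
  have htail_int : ∫⁻ u in Ioi (0 : ℝ), c * ϑ {p | u / z ≤ p.1} ≠ ∞ := by
    have hτH := hτ Hplus (measurableSet_le measurable_const measurable_fst) subset_rfl
    simp only [shiftSet_Hplus] at hτH
    rw [lintegral_const_mul' _ _ ENNReal.ofReal_ne_top, ← hτH]
    exact measure_ne_top τ Hplus
  have hξ_small : ∀ᶠ t in atTop, ξ₀ {p | t / z ≤ p.1} ≤ ENNReal.ofReal ε :=
    ((tendsto_measure_setOf_le_atTop ξ₀ measurable_fst).comp
      (tendsto_id.atTop_div_const hz)).eventually_le_const (ENNReal.ofReal_pos.2 hε)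
  have hϑ_small : ∀ᶠ t in atTop, ∫⁻ u in Ioi t, c * ϑ {p | u / z ≤ p.1} ≤ ENNReal.ofReal ε :=
    (tendsto_setLIntegral_Ioi_atTop htail_int).eventually_le_const (ENNReal.ofReal_pos.2 hε)
  obtain ⟨T, hT⟩ := (hξ_small.and hϑ_small).exists_forall_of_atTop
  refine ⟨max T 0, le_max_right _ _, fun t ht B hB hBH => ?_⟩
  obtain ⟨hξt, hϑt⟩ := hT t (le_of_max_le_left ht)
  have ht0 : 0 ≤ t := le_of_max_le_right ht
  have hτB : τ B = c * (∫⁻ s in Ioc 0 t, ϑ (shiftSet B (s / z, s)))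
      + c * ∫⁻ s in Ioi t, ϑ (shiftSet B (s / z, s)) := by
    rw [hτ B hB hBH, ← Ioc_union_Ioi_eq_Ioi ht0,
      lintegral_union measurableSet_Ioi (Ioc_disjoint_Ioi le_rfl), mul_add]
  rw [hζ t ht0 B hB hBH, hτB]
  refine abs_toReal_add_sub_add_le hε.le ?_
    ((measure_shiftSet_le_of_subset_Hplus ξ₀ hBH (t / z, t)).trans hξt) ?_
  · exact ne_top_of_le_ne_top (hτB ▸ measure_ne_top τ B) le_self_add
  · calc c * ∫⁻ s in Ioi t, ϑ (shiftSet B (s / z, s))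
        = ∫⁻ s in Ioi t, c * ϑ (shiftSet B (s / z, s)) :=
          (lintegral_const_mul' _ _ ENNReal.ofReal_ne_top).symm
      _ ≤ ∫⁻ s in Ioi t, c * ϑ {p | s / z ≤ p.1} :=
          lintegral_mono fun s => by
            gcongr c * ?_
            exact measure_shiftSet_le_of_subset_Hplus ϑ hBH _
      _ ≤ ENNReal.ofReal ε := hϑt

/-- for any finite initial measure `ξ₀` on `ℍ₊`, the fluid-model measure
`ζ(t)(B) = ξ₀(B + (t z⁻¹, t)) + α ∫₀^t ϑ(B + (s z⁻¹, s)) ds` converges to `ϑ_e^z` in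
total variation as `t → ∞`. -/
theorem stmt_15 (α : ℝ) (hα : 0 < α) (ϑ : Measure (ℝ × ℝ)) [IsProbabilityMeasure ϑ]
    (hϑsupp : ϑ {p : ℝ × ℝ | p.1 < 0} = 0)
    (hϑ0 : ϑ {p : ℝ × ℝ | p.1 = 0} = 0)
    (hϑmean : ∫⁻ p, ENNReal.ofReal p.1 ∂ϑ = ENNReal.ofReal α⁻¹)
    (z : ℝ) (hz : 0 < z) (τ : Measure (ℝ × ℝ)) [IsFiniteMeasure τ]
    (hτsupp : τ {p : ℝ × ℝ | p.1 < 0} = 0)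
    (hτ : ∀ B : Set (ℝ × ℝ), MeasurableSet B → B ⊆ Hplus →
      τ B = ENNReal.ofReal α * ∫⁻ u in Ioi (0 : ℝ), ϑ (shiftSet B (u / z, u)))
    (ξ₀ : Measure (ℝ × ℝ)) [IsFiniteMeasure ξ₀] (hξ₀ : ξ₀ {p : ℝ × ℝ | p.1 < 0} = 0)
    (ζ : ℝ → Measure (ℝ × ℝ))
    (hζ : ∀ t : ℝ, 0 ≤ t → ∀ B : Set (ℝ × ℝ), MeasurableSet B → B ⊆ Hplus →
      ζ t B = ξ₀ (shiftSet B (t / z, t))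
        + ENNReal.ofReal α * ∫⁻ s in Ioc (0 : ℝ) t, ϑ (shiftSet B (s / z, s))) :
    ∀ ε : ℝ, 0 < ε → ∃ T : ℝ, 0 ≤ T ∧ ∀ t : ℝ, T ≤ t →
      ∀ B : Set (ℝ × ℝ), MeasurableSet B → B ⊆ Hplus →
        |(ζ t B).toReal - (τ B).toReal| ≤ ε :=
  stmt_15_general α ϑ z hz τ hτ ξ₀ ζ hζ
end
end
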